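/- Refined telescope bound: Given f̂ = (f̂_1, …, f̂_H) with f̂_H = r_H and a greedy policy π̂ of f̂, define Δ_h(π; s, a) = ∑_{h′=h}^{H−1} (P^π_{h→h′} (T_{h′}^* f̂_{h′+1} − f̂_{h′}))(s, a), where P^π_{h→h′} = P_h^π P_{h+1}^π ⋯ P_{h′−1}^π (the identity when h′ = h). Then for every policy π: J(π) − J(π̂) ≤ ∑_{h=1}^{H−1} E_{π̂}[ Δ_h(π; S_h, π_h(S_h)) − Δ_h(π; S_h, π̂_h(S_h)) ]. -/

import Mathlib

open MeasureTheory ProbabilityTheory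

noncomputable section

namespace RLStability

variable {S A : Type*} [MeasurableSpace S] [MeasurableSpace A] [Nonempty A]

/-- Auxiliary occupation-measure sequence: `occAux ξ P π n` is the joint law of
`(S_{n+1}, A_{n+1})` under initial distribution `ξ` and policy `π`. -/
def occAux (ξ : Measure S) (P : ℕ → Kernel (S × A) S) (π : ℕ → S → A) :
    ℕ → Measure (S × A)
  | 0 => ξ.map fun s => (s, π 1 s)
  | n + 1 =>
      (occAux ξ P π n).bind fun sa => ((P (n + 1)) sa).map fun s' => (s', π (n + 2) s')

/-- Occupation measure of `(S_h, A_h)` under policy `π`, for stages `h ≥ 1`. -/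
def occ (ξ : Measure S) (P : ℕ → Kernel (S × A) S) (π : ℕ → S → A) (h : ℕ) :
    Measure (S × A) :=
  occAux ξ P π (h - 1)

/-- `E_π[g(S_h, A_h)]`. -/
def Epol (ξ : Measure S) (P : ℕ → Kernel (S × A) S) (π : ℕ → S → A) (h : ℕ)
    (g : S × A → ℝ) : ℝ :=
  ∫ sa, g sa ∂(occ ξ P π h)

/-- Expected return `J(π)` over horizon `H`. -/
def expReturn (ξ : Measure S) (P : ℕ → Kernel (S × A) S) (r : ℕ → S × A → ℝ)
    (H : ℕ) (π : ℕ → S → A) : ℝ :=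
  ∑ h ∈ Finset.Icc 1 H, Epol ξ P π h (r h)

/-- One-step transition operator `P_h^π`. -/
def Ppol (P : ℕ → Kernel (S × A) S) (π : ℕ → S → A) (h : ℕ) (f : S × A → ℝ) :
    S × A → ℝ :=
  fun sa => ∫ s', f (s', π (h + 1) s') ∂((P h) sa)

/-- `PmultiAux P π k h g` applies `k` steps of the transition operators starting at stage `h`. -/
def PmultiAux (P : ℕ → Kernel (S × A) S) (π : ℕ → S → A) :
    ℕ → ℕ → (S × A → ℝ) → S × A → ℝ
  | 0, _, g => g
  | k + 1, h, g => Ppol P π h (PmultiAux P π k (h + 1) g)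

/-- Multi-step transition operator `P^π_{h → h'} = P_h^π ⋯ P_{h'-1}^π`. -/
def Pmulti (P : ℕ → Kernel (S × A) S) (π : ℕ → S → A) (h h' : ℕ)
    (g : S × A → ℝ) : S × A → ℝ :=
  PmultiAux P π (h' - h) h g

/-- Bellman optimality operator `T_h^*`. -/
def Tstar (P : ℕ → Kernel (S × A) S) (r : ℕ → S × A → ℝ) (h : ℕ)
    (f : S × A → ℝ) : S × A → ℝ :=
  fun sa => r h sa + ∫ s', (⨆ a' : A, f (s', a')) ∂((P h) sa)

def qstarAux (P : ℕ → Kernel (S × A) S) (r : ℕ → S × A → ℝ) (H : ℕ) :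
    ℕ → S × A → ℝ
  | 0 => r H
  | k + 1 => Tstar P r (H - (k + 1)) (qstarAux P r H k)

/-- Optimal Q-function at stage `h`: `q*_H = r_H`, `q*_h = T_h^* q*_{h+1}`. -/
def qstar (P : ℕ → Kernel (S × A) S) (r : ℕ → S × A → ℝ) (H h : ℕ) :
    S × A → ℝ :=
  qstarAux P r H (H - h)

/-- `π` is greedy with respect to the tuple of Q-functions `f = (f_1, …, f_H)`. -/
def IsGreedy (H : ℕ) (f : ℕ → S × A → ℝ) (π : ℕ → S → A) : Prop :=
  ∀ h ∈ Finset.Icc 1 H, ∀ s : S, f h (s, π h s) = ⨆ a : A, f h (s, a)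

/-- Occupation-measure norm `‖f‖_h` (with respect to the policy `πs`). -/
def onorm (ξ : Measure S) (P : ℕ → Kernel (S × A) S) (πs : ℕ → S → A) (h : ℕ)
    (f : S × A → ℝ) : ℝ :=
  Real.sqrt (∫ sa, f sa ^ 2 ∂(occ ξ P πs h))

/-- Bounded measurable real functions on the state–action space. -/
def BddMeas (f : S × A → ℝ) : Prop :=
  Measurable f ∧ ∃ C : ℝ, ∀ x, |f x| ≤ C

/-- The Minkowski difference class `∂F = F - F`. -/
def diffSet (F : Set (S × A → ℝ)) : Set (S × A → ℝ) :=
  {g | ∃ f₁ ∈ F, ∃ f₂ ∈ F, g = f₁ - f₂}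

set_option linter.unusedSectionVars false

section Aux

variable (ξ : Measure S) [IsProbabilityMeasure ξ]
variable (P : ℕ → Kernel (S × A) S) [∀ h, IsMarkovKernel (P h)]

lemma integrable_of_bddMeas {α : Type*} [MeasurableSpace α] (μ : Measure α)
    [IsFiniteMeasure μ] {f : α → ℝ} (hm : Measurable f) {C : ℝ} (hC : ∀ x, |f x| ≤ C) :
    Integrable f μ :=
  ⟨hm.aestronglyMeasurable, HasFiniteIntegral.of_bounded (C := C)
    (Filter.Eventually.of_forall fun x => by simpa [Real.norm_eq_abs] using hC x)⟩

lemma BddMeas.integrable {g : S × A → ℝ} (hg : BddMeas g)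
    (μ : Measure (S × A)) [IsFiniteMeasure μ] : Integrable g μ := by
  obtain ⟨hm, C, hC⟩ := hg
  exact integrable_of_bddMeas μ hm hC

lemma BddMeas.add {f g : S × A → ℝ} (hf : BddMeas f) (hg : BddMeas g) :
    BddMeas (fun x => f x + g x) := by
  obtain ⟨hmf, Cf, hCf⟩ := hf
  obtain ⟨hmg, Cg, hCg⟩ := hg
  exact ⟨hmf.add hmg, Cf + Cg, fun x =>
    (abs_add_le _ _).trans (add_le_add (hCf x) (hCg x))⟩

lemma BddMeas.sub {f g : S × A → ℝ} (hf : BddMeas f) (hg : BddMeas g) :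
    BddMeas (fun x => f x - g x) := by
  obtain ⟨hmf, Cf, hCf⟩ := hf
  obtain ⟨hmg, Cg, hCg⟩ := hg
  exact ⟨hmf.sub hmg, Cf + Cg, fun x =>
    (abs_sub _ _).trans (add_le_add (hCf x) (hCg x))⟩

lemma BddMeas.compPair {g : S × A → ℝ} (hg : BddMeas g) {ρ : S → A} (hρ : Measurable ρ) :
    BddMeas (fun sa : S × A => g (sa.1, ρ sa.1)) := by
  obtain ⟨hm, C, hC⟩ := hg
  exact ⟨hm.comp (measurable_fst.prodMk (hρ.comp measurable_fst)), C, fun x => hC _⟩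

lemma bddMeas_sum {ι : Type*} (t : Finset ι) (f : ι → S × A → ℝ)
    (hf : ∀ i ∈ t, BddMeas (f i)) : BddMeas (fun x => ∑ i ∈ t, f i x) := by
  classical
  induction t using Finset.induction_on with
  | empty => exact ⟨measurable_const, 0, by simp⟩
  | @insert a s ha ih =>
    simp only [Finset.sum_insert ha]
    exact (hf a (Finset.mem_insert_self a s)).add
      (ih fun i hi => hf i (Finset.mem_insert_of_mem hi))

lemma occAux_prob (π : ℕ → S → A) (hπ : ∀ h, Measurable (π h)) (n : ℕ) :
    IsProbabilityMeasure (occAux ξ P π n) := by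
  induction n with
  | zero =>
    rw [occAux]
    have hme : Measurable fun s : S => (s, π 1 s) := measurable_id.prodMk (hπ 1)
    exact Measure.isProbabilityMeasure_map hme.aemeasurable
  | succ n ih =>
    rw [occAux]
    have he : Measurable fun s' : S => (s', π (n + 2) s') :=
      measurable_id.prodMk (hπ (n + 2))
    have hmeasmap : Measurable fun sa : S × A =>
        ((P (n + 1)) sa).map fun s' => (s', π (n + 2) s') :=
      (Measure.measurable_map _ he).comp (P (n + 1)).measurable
    constructor
    rw [Measure.bind_apply MeasurableSet.univ hmeasmap.aemeasurable]
    have : ∀ sa : S × A,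
        (((P (n + 1)) sa).map fun s' => (s', π (n + 2) s')) Set.univ = 1 := by
      intro sa
      rw [Measure.map_apply he MeasurableSet.univ]
      simp
    simp only [this, MeasureTheory.lintegral_one]
    exact ih.measure_univ

lemma occ_prob (π : ℕ → S → A) (hπ : ∀ h, Measurable (π h)) (h : ℕ) :
    IsProbabilityMeasure (occ ξ P π h) :=
  occAux_prob ξ P π hπ (h - 1)

lemma integral_bind_kernel {α β : Type*} [MeasurableSpace α] [MeasurableSpace β]
    (μ : Measure α) [IsProbabilityMeasure μ] (κ : Kernel α β) [IsMarkovKernel κ]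
    {g : β → ℝ} (hmeas : Measurable g) {C : ℝ} (hC : ∀ x, |g x| ≤ C) :
    ∫ x, g x ∂(μ.bind fun a => κ a) = ∫ a, ∫ x, g x ∂(κ a) ∂μ := by
  have hbind : (μ.bind fun a => κ a) = (μ ⊗ₘ κ).map Prod.snd := by
    ext s hs
    rw [Measure.bind_apply hs κ.measurable.aemeasurable, Measure.map_apply measurable_snd hs,
      Measure.compProd_apply (measurable_snd hs)]
    rfl
  rw [hbind, integral_map measurable_snd.aemeasurable hmeas.aestronglyMeasurable]
  exact Measure.integral_compProd (f := fun x : α × β => g x.2)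
    (integrable_of_bddMeas _ (hmeas.comp measurable_snd) (fun x => hC x.2))

lemma integral_occAux_succ (π : ℕ → S → A) (hπ : ∀ h, Measurable (π h))
    {g : S × A → ℝ} (hg : BddMeas g) (n : ℕ) :
    ∫ x, g x ∂(occAux ξ P π (n + 1))
      = ∫ sa, ∫ s', g (s', π (n + 2) s') ∂((P (n + 1)) sa) ∂(occAux ξ P π n) := by
  obtain ⟨hm, C, hC⟩ := hg
  haveI := occAux_prob ξ P π hπ n
  have he : Measurable fun s' : S => (s', π (n + 2) s') :=
    measurable_id.prodMk (hπ (n + 2))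
  haveI : IsMarkovKernel ((P (n + 1)).map fun s' => (s', π (n + 2) s')) :=
    Kernel.IsMarkovKernel.map _ he
  have hker : (fun sa : S × A => ((P (n + 1)) sa).map fun s' => (s', π (n + 2) s'))
      = fun sa => ((P (n + 1)).map fun s' => (s', π (n + 2) s')) sa := by
    funext sa
    rw [Kernel.map_apply _ he]
  rw [occAux, hker, integral_bind_kernel _ _ hm hC]
  refine integral_congr_ae (Filter.Eventually.of_forall fun sa => ?_)
  show ∫ x, g x ∂(((P (n + 1)).map fun s' => (s', π (n + 2) s')) sa)
      = ∫ s', g (s', π (n + 2) s') ∂((P (n + 1)) sa)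
  rw [Kernel.map_apply _ he, integral_map he.aemeasurable hm.aestronglyMeasurable]

lemma Ppol_bddMeas (π : ℕ → S → A) (hπ : ∀ h, Measurable (π h)) (h : ℕ)
    {g : S × A → ℝ} (hg : BddMeas g) : BddMeas (Ppol P π h g) := by
  obtain ⟨hm, C, hC⟩ := hg
  constructor
  · exact (MeasureTheory.StronglyMeasurable.integral_kernel_prod_right (κ := P h)
      (f := fun sa s' => g (s', π (h + 1) s'))
      (hm.comp (measurable_snd.prodMk ((hπ (h + 1)).comp measurable_snd))).stronglyMeasurable).measurable
  · refine ⟨C, fun sa => ?_⟩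
    have : ‖∫ s', g (s', π (h + 1) s') ∂((P h) sa)‖ ≤ C * (((P h) sa) Set.univ).toReal :=
      norm_integral_le_of_norm_le_const
        (Filter.Eventually.of_forall fun s' => by simpa [Real.norm_eq_abs] using hC _)
    simpa [Real.norm_eq_abs, Ppol] using this

lemma PmultiAux_bddMeas (π : ℕ → S → A) (hπ : ∀ h, Measurable (π h)) :
    ∀ (k h : ℕ) {g : S × A → ℝ}, BddMeas g → BddMeas (PmultiAux P π k h g) := by
  intro k
  induction k with
  | zero => intro h g hg; exact hg
  | succ k ih =>
    intro h g hg
    exact Ppol_bddMeas P π hπ h (ih (h + 1) hg)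

lemma occAux_congr (σ σ' : ℕ → S → A) (n : ℕ)
    (hag : ∀ j, 1 ≤ j → j ≤ n + 1 → σ j = σ' j) :
    occAux ξ P σ n = occAux ξ P σ' n := by
  induction n with
  | zero => rw [occAux, occAux, hag 1 le_rfl (by omega)]
  | succ n ih =>
    rw [occAux, occAux, ih (fun j h1 h2 => hag j h1 (by omega)),
      hag (n + 2) (by omega) le_rfl]

lemma Epol_congr (σ σ' : ℕ → S → A) (h : ℕ) (hh : 1 ≤ h)
    (hag : ∀ j, 1 ≤ j → j ≤ h → σ j = σ' j) (g : S × A → ℝ) :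
    Epol ξ P σ h g = Epol ξ P σ' h g := by
  unfold Epol occ
  rw [occAux_congr ξ P σ σ' (h - 1) (fun j h1 h2 => hag j h1 (by omega))]

lemma Epol_succ (σ : ℕ → S → A) (hσ : ∀ j, Measurable (σ j)) (h : ℕ) (hh : 1 ≤ h)
    {g : S × A → ℝ} (hg : BddMeas g) :
    Epol ξ P σ (h + 1) g = Epol ξ P σ h (Ppol P σ h g) := by
  obtain ⟨n, rfl⟩ : ∃ n, h = n + 1 := ⟨h - 1, by omega⟩
  unfold Epol occ
  have h1 : n + 1 + 1 - 1 = n + 1 := by omega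
  rw [h1, integral_occAux_succ ξ P σ hσ hg n]
  rfl

lemma Epol_one (σ : ℕ → S → A) (hσ : ∀ j, Measurable (σ j))
    {g : S × A → ℝ} (hg : BddMeas g) :
    Epol ξ P σ 1 g = ∫ s, g (s, σ 1 s) ∂ξ := by
  unfold Epol occ
  have hme : Measurable fun s : S => (s, σ 1 s) := measurable_id.prodMk (hσ 1)
  rw [show (1 : ℕ) - 1 = 0 from rfl, occAux,
    integral_map hme.aemeasurable hg.1.aestronglyMeasurable]

lemma Epol_add (σ : ℕ → S → A) (hσ : ∀ j, Measurable (σ j)) (h : ℕ)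
    {f g : S × A → ℝ} (hf : BddMeas f) (hg : BddMeas g) :
    Epol ξ P σ h (fun sa => f sa + g sa) = Epol ξ P σ h f + Epol ξ P σ h g := by
  haveI := occ_prob ξ P σ hσ h
  exact integral_add (hf.integrable _) (hg.integrable _)

lemma Epol_sub (σ : ℕ → S → A) (hσ : ∀ j, Measurable (σ j)) (h : ℕ)
    {f g : S × A → ℝ} (hf : BddMeas f) (hg : BddMeas g) :
    Epol ξ P σ h (fun sa => f sa - g sa) = Epol ξ P σ h f - Epol ξ P σ h g := by
  haveI := occ_prob ξ P σ hσ h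
  exact integral_sub (hf.integrable _) (hg.integrable _)

lemma Epol_mono (σ : ℕ → S → A) (hσ : ∀ j, Measurable (σ j)) (h : ℕ)
    {f g : S × A → ℝ} (hf : BddMeas f) (hg : BddMeas g) (hle : ∀ x, f x ≤ g x) :
    Epol ξ P σ h f ≤ Epol ξ P σ h g := by
  haveI := occ_prob ξ P σ hσ h
  exact integral_mono (hf.integrable _) (hg.integrable _) hle

lemma Epol_sum (σ : ℕ → S → A) (hσ : ∀ j, Measurable (σ j)) (h : ℕ)
    {ι : Type*} (t : Finset ι) (f : ι → S × A → ℝ) (hf : ∀ i ∈ t, BddMeas (f i)) :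
    Epol ξ P σ h (fun sa => ∑ i ∈ t, f i sa) = ∑ i ∈ t, Epol ξ P σ h (f i) := by
  haveI := occ_prob ξ P σ hσ h
  exact integral_finset_sum t fun i hi => (hf i hi).integrable _

lemma Epol_pmultiAux (π : ℕ → S → A) (hπ : ∀ j, Measurable (π j))
    {g : S × A → ℝ} (hg : BddMeas g) :
    ∀ (k : ℕ) (σ : ℕ → S → A), (∀ j, Measurable (σ j)) → ∀ (h : ℕ), 1 ≤ h →
      Epol ξ P σ h (PmultiAux P π k h g)
        = Epol ξ P (fun j => if j ≤ h then σ j else π j) (h + k) g := by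
  intro k
  induction k with
  | zero =>
    intro σ hσ h hh
    rw [PmultiAux, Nat.add_zero]
    exact Epol_congr ξ P σ _ h hh (fun j h1 h2 => by simp [h2]) g
  | succ k ih =>
    intro σ hσ h hh
    set ν : ℕ → S → A := fun j => if j ≤ h then σ j else π j with hν
    have hνm : ∀ j, Measurable (ν j) := by
      intro j
      by_cases hj : j ≤ h <;> simp only [hν, hj, if_true, if_false]
      exacts [hσ j, hπ j]
    have hF : BddMeas (PmultiAux P π k (h + 1) g) := PmultiAux_bddMeas P π hπ k (h + 1) hg
    have step1 : Epol ξ P σ h (Ppol P π h (PmultiAux P π k (h + 1) g))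
        = Epol ξ P ν (h + 1) (PmultiAux P π k (h + 1) g) := by
      rw [Epol_succ ξ P ν hνm h hh hF]
      have hpp : Ppol P ν h (PmultiAux P π k (h + 1) g)
          = Ppol P π h (PmultiAux P π k (h + 1) g) := by
        funext sa
        simp only [Ppol, hν, show ¬(h + 1 ≤ h) by omega, if_false]
      rw [hpp]
      exact Epol_congr ξ P σ ν h hh (fun j h1 h2 => by simp [hν, h2]) _
    rw [PmultiAux, step1, ih ν hνm (h + 1) (by omega)]
    have hpol : (fun j => if j ≤ h + 1 then ν j else π j) = ν := by
      funext j
      by_cases h1 : j ≤ h + 1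
      · simp [h1]
      · simp only [h1, if_false, hν, show ¬ j ≤ h by omega]
    rw [hpol, show h + 1 + k = h + (k + 1) by omega]

lemma Epol_swap (σ : ℕ → S → A) (hσ : ∀ j, Measurable (σ j))
    (ρ : S → A) (hρ : Measurable ρ) (h : ℕ) (hh : 1 ≤ h)
    {g : S × A → ℝ} (hg : BddMeas g) :
    Epol ξ P σ h (fun sa => g (sa.1, ρ sa.1))
      = Epol ξ P (fun j => if j = h then ρ else σ j) h g := by
  set σ' : ℕ → S → A := fun j => if j = h then ρ else σ j with hσ'
  have hσ'm : ∀ j, Measurable (σ' j) := by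
    intro j
    by_cases hj : j = h <;> simp only [hσ', hj, if_true, if_false]
    exacts [hρ, hσ j]
  obtain ⟨n, rfl⟩ : ∃ n, h = n + 1 := ⟨h - 1, by omega⟩
  cases n with
  | zero =>
    rw [Epol_one ξ P σ hσ (hg.compPair hρ), Epol_one ξ P σ' hσ'm hg]
    simp [hσ']
  | succ m =>
    unfold Epol occ
    rw [show m + 1 + 1 - 1 = m + 1 from rfl,
      integral_occAux_succ ξ P σ hσ (hg.compPair hρ) m,
      integral_occAux_succ ξ P σ' hσ'm hg m,
      occAux_congr ξ P σ' σ m (fun j h1 h2 => by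
        simp [hσ', show j ≠ m + 2 by omega])]
    simp [hσ']

end Aux

/-- The one-step Bellman residual of `fhat` along the greedy policy. -/
def epsHat (P : ℕ → Kernel (S × A) S) (r : ℕ → S × A → ℝ) (fhat : ℕ → S × A → ℝ)
    (πhat : ℕ → S → A) (h : ℕ) : S × A → ℝ :=
  fun sa => r h sa + Ppol P πhat h (fhat (h + 1)) sa - fhat h sa

/-- The policy that plays `πhat` before stage `k` and `π` from stage `k` on. -/
def swPol (πhat π : ℕ → S → A) (k : ℕ) : ℕ → S → A :=
  fun j => if j < k then πhat j else π j


/-- the refined telescope bound, with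
`Δ_h(π; s, a) = ∑_{h'=h}^{H-1} (P^π_{h→h'} (T_{h'}^* f̂_{h'+1} − f̂_{h'}))(s, a)`. -/
theorem refined_telescope_bound
    (H : ℕ) (hH : 2 ≤ H)
    (ξ : Measure S) [IsProbabilityMeasure ξ]
    (P : ℕ → Kernel (S × A) S) [∀ h, IsMarkovKernel (P h)]
    (r : ℕ → S × A → ℝ) (hr : ∀ h ∈ Finset.Icc 1 H, BddMeas (r h))
    (fhat : ℕ → S × A → ℝ) (hfhatBM : ∀ h ∈ Finset.Icc 1 H, BddMeas (fhat h))
    (hfhatH : fhat H = r H)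
    (πhat : ℕ → S → A) (hπhat : ∀ h, Measurable (πhat h))
    (hgreedy : IsGreedy H fhat πhat)
    (π : ℕ → S → A) (hπ : ∀ h, Measurable (π h)) :
    expReturn ξ P r H π - expReturn ξ P r H πhat ≤
      ∑ h ∈ Finset.Icc 1 (H - 1),
        Epol ξ P πhat h (fun sa =>
          (∑ h' ∈ Finset.Icc h (H - 1),
            Pmulti P π h h'
              (fun x => Tstar P r h' (fhat (h' + 1)) x - fhat h' x) (sa.1, π h sa.1)) -
          (∑ h' ∈ Finset.Icc h (H - 1),
            Pmulti P π h h'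
              (fun x => Tstar P r h' (fhat (h' + 1)) x - fhat h' x) (sa.1, πhat h sa.1))) := by
  classical
  obtain ⟨n, rfl⟩ : ∃ n, H = n + 2 := ⟨H - 2, by omega⟩
  have hmem : ∀ h', 1 ≤ h' → h' ≤ n + 2 → h' ∈ Finset.Icc 1 (n + 2) :=
    fun h' a b => Finset.mem_Icc.mpr ⟨a, b⟩
  rw [show n + 2 - 1 = n + 1 from by omega]
  have hεbdd : ∀ h', 1 ≤ h' → h' ≤ n + 1 → BddMeas (epsHat P r fhat πhat h') := by
    intro h' h1 h2
    exact ((hr h' (hmem h' h1 (by omega))).add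
        (Ppol_bddMeas P πhat hπhat h'
          (hfhatBM (h' + 1) (hmem _ (by omega) (by omega))))).sub
      (hfhatBM h' (hmem h' h1 (by omega)))
  have hT : ∀ h', 1 ≤ h' → h' ≤ n + 1 →
      (fun x => Tstar P r h' (fhat (h' + 1)) x - fhat h' x) = epsHat P r fhat πhat h' := by
    intro h' h1 h2
    funext x
    have hsup : (fun s' => ⨆ a' : A, fhat (h' + 1) (s', a'))
        = fun s' => fhat (h' + 1) (s', πhat (h' + 1) s') := by
      funext s'
      exact (hgreedy (h' + 1) (hmem _ (by omega) (by omega)) s').symm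
    simp only [Tstar, epsHat, Ppol, hsup]
  -- Part A : the telescope identity for the expected return
  have hexp : ∀ (σ : ℕ → S → A), (∀ j, Measurable (σ j)) →
      expReturn ξ P r (n + 2) σ = Epol ξ P σ 1 (fhat 1)
        + ∑ h ∈ Finset.Icc 1 (n + 1),
            Epol ξ P σ h (fun sa => r h sa + Ppol P σ h (fhat (h + 1)) sa - fhat h sa) := by
    intro σ hσ
    have hterm : ∀ h ∈ Finset.Icc 1 (n + 1),
        Epol ξ P σ h (fun sa => r h sa + Ppol P σ h (fhat (h + 1)) sa - fhat h sa)
          = Epol ξ P σ h (r h)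
            + (Epol ξ P σ (h + 1) (fhat (h + 1)) - Epol ξ P σ h (fhat h)) := by
      intro h hhmem
      rw [Finset.mem_Icc] at hhmem
      obtain ⟨h1, h2⟩ := hhmem
      have hPp : BddMeas (Ppol P σ h (fhat (h + 1))) :=
        Ppol_bddMeas P σ hσ h (hfhatBM (h + 1) (hmem _ (by omega) (by omega)))
      have hrh : BddMeas (r h) := hr h (hmem h h1 (by omega))
      have hfh : BddMeas (fhat h) := hfhatBM h (hmem h h1 (by omega))
      rw [Epol_sub ξ P σ hσ h (hrh.add hPp) hfh, Epol_add ξ P σ hσ h hrh hPp,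
        ← Epol_succ ξ P σ hσ h h1 (hfhatBM (h + 1) (hmem _ (by omega) (by omega)))]
      ring
    rw [Finset.sum_congr rfl hterm, Finset.sum_add_distrib]
    have htel : ∀ m : ℕ, ∑ h ∈ Finset.Icc 1 m,
        (Epol ξ P σ (h + 1) (fhat (h + 1)) - Epol ξ P σ h (fhat h))
          = Epol ξ P σ (m + 1) (fhat (m + 1)) - Epol ξ P σ 1 (fhat 1) := by
      intro m
      induction m with
      | zero => simp
      | succ m ih => rw [Finset.sum_Icc_succ_top (by omega), ih]; ring
    rw [htel (n + 1)]
    have hsplit : expReturn ξ P r (n + 2) σ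
        = ∑ h ∈ Finset.Icc 1 (n + 1), Epol ξ P σ h (r h)
          + Epol ξ P σ (n + 2) (r (n + 2)) := by
      unfold expReturn
      rw [show (n + 2) = (n + 1) + 1 from rfl, Finset.sum_Icc_succ_top (by omega)]
    rw [hsplit, hfhatH]
    ring
  -- σ = πhat : equality
  have hπhat_eq : expReturn ξ P r (n + 2) πhat
      = Epol ξ P πhat 1 (fhat 1)
        + ∑ h ∈ Finset.Icc 1 (n + 1), Epol ξ P πhat h (epsHat P r fhat πhat h) :=
    hexp πhat hπhat
  -- σ = π : inequality
  have hπ_le : expReturn ξ P r (n + 2) π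
      ≤ Epol ξ P π 1 (fhat 1)
        + ∑ h ∈ Finset.Icc 1 (n + 1), Epol ξ P π h (epsHat P r fhat πhat h) := by
    rw [hexp π hπ]
    refine add_le_add (le_refl _) (Finset.sum_le_sum fun h hhmem => ?_)
    rw [Finset.mem_Icc] at hhmem
    obtain ⟨h1, h2⟩ := hhmem
    have hf1 : BddMeas (fhat (h + 1)) := hfhatBM (h + 1) (hmem _ (by omega) (by omega))
    refine Epol_mono ξ P π hπ h
      (((hr h (hmem h h1 (by omega))).add (Ppol_bddMeas P π hπ h hf1)).sub
        (hfhatBM h (hmem h h1 (by omega))))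
      (hεbdd h h1 h2) fun sa => ?_
    obtain ⟨hm, C, hC⟩ := hf1
    have hPle : Ppol P π h (fhat (h + 1)) sa ≤ Ppol P πhat h (fhat (h + 1)) sa := by
      unfold Ppol
      refine integral_mono
        (integrable_of_bddMeas _ (hm.comp (measurable_id.prodMk (hπ (h + 1)))) fun s' => hC _)
        (integrable_of_bddMeas _ (hm.comp (measurable_id.prodMk (hπhat (h + 1)))) fun s' => hC _)
        fun s' => ?_
      rw [hgreedy (h + 1) (hmem _ (by omega) (by omega)) s']
      exact le_ciSup ⟨C, by rintro y ⟨a, rfl⟩; exact (abs_le.mp (hC (s', a))).2⟩ (π (h + 1) s')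
    simp only [epsHat]
    linarith
  -- comparison of the initial terms
  have hfh1 : Epol ξ P π 1 (fhat 1) ≤ Epol ξ P πhat 1 (fhat 1) := by
    obtain ⟨hm, C, hC⟩ := hfhatBM 1 (hmem 1 le_rfl (by omega))
    rw [Epol_one ξ P π hπ ⟨hm, C, hC⟩, Epol_one ξ P πhat hπhat ⟨hm, C, hC⟩]
    refine integral_mono
      (integrable_of_bddMeas _ (hm.comp (measurable_id.prodMk (hπ 1))) fun s => hC _)
      (integrable_of_bddMeas _ (hm.comp (measurable_id.prodMk (hπhat 1))) fun s => hC _)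
      fun s => ?_
    rw [hgreedy 1 (hmem 1 le_rfl (by omega)) s]
    exact le_ciSup ⟨C, by rintro y ⟨a, rfl⟩; exact (abs_le.mp (hC (s, a))).2⟩ (π 1 s)
  -- Part B : the right-hand side telescopes
  have hτm : ∀ k j, Measurable (swPol πhat π k j) := by
    intro k j
    by_cases hj : j < k <;> simp only [swPol, hj, if_true, if_false]
    exacts [hπhat j, hπ j]
  set Φ : ℕ → ℝ := fun k =>
    ∑ h' ∈ Finset.Icc 1 (n + 1), Epol ξ P (swPol πhat π k) h' (epsHat P r fhat πhat h')
    with hΦdef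
  have hterm2 : ∀ h ∈ Finset.Icc 1 (n + 1),
      Epol ξ P πhat h (fun sa =>
          (∑ h' ∈ Finset.Icc h (n + 1), Pmulti P π h h'
              (fun x => Tstar P r h' (fhat (h' + 1)) x - fhat h' x) (sa.1, π h sa.1))
        - (∑ h' ∈ Finset.Icc h (n + 1), Pmulti P π h h'
              (fun x => Tstar P r h' (fhat (h' + 1)) x - fhat h' x) (sa.1, πhat h sa.1)))
      = Φ h - Φ (h + 1) := by
    intro h hhmem
    rw [Finset.mem_Icc] at hhmem
    obtain ⟨h1, h2⟩ := hhmem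
    have hTs : ∀ h' ∈ Finset.Icc h (n + 1),
        Pmulti P π h h' (fun x => Tstar P r h' (fhat (h' + 1)) x - fhat h' x)
          = PmultiAux P π (h' - h) h (epsHat P r fhat πhat h') := by
      intro h' hmem'
      rw [Finset.mem_Icc] at hmem'
      rw [Pmulti, hT h' (by omega) (by omega)]
    set Δ : S × A → ℝ := fun sa =>
      ∑ h' ∈ Finset.Icc h (n + 1), PmultiAux P π (h' - h) h (epsHat P r fhat πhat h') sa
      with hΔdef
    have hΔbdd : BddMeas Δ := by
      rw [hΔdef]
      refine bddMeas_sum _ _ fun h' hmem' => ?_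
      rw [Finset.mem_Icc] at hmem'
      exact PmultiAux_bddMeas P π hπ _ h (hεbdd h' (by omega) (by omega))
    have hmulbdd : ∀ h' ∈ Finset.Icc h (n + 1),
        BddMeas (PmultiAux P π (h' - h) h (epsHat P r fhat πhat h')) := by
      intro h' hmem'
      rw [Finset.mem_Icc] at hmem'
      exact PmultiAux_bddMeas P π hπ _ h (hεbdd h' (by omega) (by omega))
    have hint : (fun sa : S × A =>
        (∑ h' ∈ Finset.Icc h (n + 1), Pmulti P π h h'
            (fun x => Tstar P r h' (fhat (h' + 1)) x - fhat h' x) (sa.1, π h sa.1))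
        - (∑ h' ∈ Finset.Icc h (n + 1), Pmulti P π h h'
            (fun x => Tstar P r h' (fhat (h' + 1)) x - fhat h' x) (sa.1, πhat h sa.1)))
        = fun sa => Δ (sa.1, π h sa.1) - Δ (sa.1, πhat h sa.1) := by
      funext sa
      rw [hΔdef]
      simp only
      rw [Finset.sum_congr rfl fun h' hm' => congrFun (hTs h' hm') (sa.1, π h sa.1),
        Finset.sum_congr rfl fun h' hm' => congrFun (hTs h' hm') (sa.1, πhat h sa.1)]
    rw [hint, Epol_sub ξ P πhat hπhat h (hΔbdd.compPair (hπ h)) (hΔbdd.compPair (hπhat h))]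
    have hG : Epol ξ P πhat h (fun sa => Δ (sa.1, π h sa.1))
        = ∑ h' ∈ Finset.Icc h (n + 1),
            Epol ξ P (swPol πhat π h) h' (epsHat P r fhat πhat h') := by
      rw [Epol_swap ξ P πhat hπhat (π h) (hπ h) h h1 hΔbdd]
      rw [Epol_congr ξ P _ (swPol πhat π h) h h1 (fun j j1 j2 => by
        by_cases hj : j = h
        · simp [hj, swPol, lt_irrefl]
        · simp [hj, swPol, show j < h by omega]) Δ]
      rw [hΔdef, Epol_sum ξ P (swPol πhat π h) (hτm h) h _ _ hmulbdd]
      refine Finset.sum_congr rfl fun h' hm' => ?_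
      rw [Finset.mem_Icc] at hm'
      rw [Epol_pmultiAux ξ P π hπ (hεbdd h' (by omega) (by omega)) (h' - h)
        (swPol πhat π h) (hτm h) h h1, show h + (h' - h) = h' from by omega]
      refine Epol_congr ξ P _ (swPol πhat π h) h' (by omega) (fun j j1 j2 => ?_) _
      by_cases hj : j ≤ h
      · simp [hj]
      · simp [hj, swPol, show ¬ j < h by omega]
    have hB : Epol ξ P πhat h (fun sa => Δ (sa.1, πhat h sa.1))
        = ∑ h' ∈ Finset.Icc h (n + 1),
            Epol ξ P (swPol πhat π (h + 1)) h' (epsHat P r fhat πhat h') := by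
      rw [Epol_swap ξ P πhat hπhat (πhat h) (hπhat h) h h1 hΔbdd]
      rw [Epol_congr ξ P _ πhat h h1 (fun j j1 j2 => by
        by_cases hj : j = h <;> simp [hj]) Δ]
      rw [hΔdef, Epol_sum ξ P πhat hπhat h _ _ hmulbdd]
      refine Finset.sum_congr rfl fun h' hm' => ?_
      rw [Finset.mem_Icc] at hm'
      rw [Epol_pmultiAux ξ P π hπ (hεbdd h' (by omega) (by omega)) (h' - h)
        πhat hπhat h h1, show h + (h' - h) = h' from by omega]
      refine Epol_congr ξ P _ (swPol πhat π (h + 1)) h' (by omega) (fun j j1 j2 => ?_) _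
      by_cases hj : j ≤ h
      · simp [hj, swPol, show j < h + 1 by omega]
      · simp [hj, swPol, show ¬ j < h + 1 by omega]
    rw [hG, hB]
    have hIoc1 : Finset.Icc 1 (n + 1) = Finset.Ioc 0 (n + 1) := by
      ext x; simp only [Finset.mem_Icc, Finset.mem_Ioc]; omega
    have hIoc2 : Finset.Icc h (n + 1) = Finset.Ioc (h - 1) (n + 1) := by
      ext x; simp only [Finset.mem_Icc, Finset.mem_Ioc]; omega
    have hsplitΦ : ∀ k : ℕ,
        Φ k = (∑ h' ∈ Finset.Ioc 0 (h - 1),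
                Epol ξ P (swPol πhat π k) h' (epsHat P r fhat πhat h'))
          + ∑ h' ∈ Finset.Icc h (n + 1),
                Epol ξ P (swPol πhat π k) h' (epsHat P r fhat πhat h') := by
      intro k
      rw [hΦdef]
      simp only
      rw [hIoc1, hIoc2,
        Finset.sum_Ioc_consecutive _ (by omega : (0:ℕ) ≤ h - 1) (by omega : h - 1 ≤ n + 1)]
    have hlow : ∑ h' ∈ Finset.Ioc 0 (h - 1),
          Epol ξ P (swPol πhat π h) h' (epsHat P r fhat πhat h')
        = ∑ h' ∈ Finset.Ioc 0 (h - 1),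
          Epol ξ P (swPol πhat π (h + 1)) h' (epsHat P r fhat πhat h') := by
      refine Finset.sum_congr rfl fun h' hm' => ?_
      rw [Finset.mem_Ioc] at hm'
      refine Epol_congr ξ P _ _ h' (by omega) (fun j j1 j2 => ?_) _
      simp [swPol, show j < h by omega, show j < h + 1 by omega]
    rw [hsplitΦ h, hsplitΦ (h + 1), hlow]
    ring
  rw [Finset.sum_congr rfl hterm2]
  have hmain : ∀ m : ℕ, ∑ h ∈ Finset.Icc 1 m, (Φ h - Φ (h + 1)) = Φ 1 - Φ (m + 1) := by
    intro m
    induction m with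
    | zero => simp
    | succ m ih => rw [Finset.sum_Icc_succ_top (by omega), ih]; ring
  rw [hmain (n + 1)]
  have hΦ1 : Φ 1 = ∑ h' ∈ Finset.Icc 1 (n + 1), Epol ξ P π h' (epsHat P r fhat πhat h') := by
    rw [hΦdef]
    simp only
    refine Finset.sum_congr rfl fun h' hm' => ?_
    rw [Finset.mem_Icc] at hm'
    exact Epol_congr ξ P _ π h' (by omega)
      (fun j j1 j2 => by simp [swPol, show ¬ j < 1 by omega]) _
  have hΦtop : Φ (n + 2)
      = ∑ h' ∈ Finset.Icc 1 (n + 1), Epol ξ P πhat h' (epsHat P r fhat πhat h') := by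
    rw [hΦdef]
    simp only
    refine Finset.sum_congr rfl fun h' hm' => ?_
    rw [Finset.mem_Icc] at hm'
    exact Epol_congr ξ P _ πhat h' (by omega)
      (fun j j1 j2 => by simp [swPol, show j < n + 2 by omega]) _
  rw [hΦ1, hΦtop]
  rw [hπhat_eq]
  linarith

end RLStability
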